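/- arXiv:1201.6432 — 11 statements merged into one kernel-verified Lean document; each statement's English description precedes it below -/
import Mathlib

section
/- For all positive real numbers a, b with a ≠ b, and with λ = (1 + √(12/π − 3))/2, the strict inequality C̄(λ·a + (1−λ)·b, λ·b + (1−λ)·a) < T(a,b) holds. -/
open Real

/-- The Seiffert mean of two positive reals. -/
noncomputable def seiffertT (a b : ℝ) : ℝ := (a - b) / (2 * Real.arctan ((a - b) / (a + b)))

/-- The centroidal mean of two positive reals. -/
noncomputable def centroidalMean (a b : ℝ) : ℝ := 2 * (a ^ 2 + a * b + b ^ 2) / (3 * (a + b))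

/-!
Put `t = (a - b) / (a + b) ∈ (-1, 1)`. Both means are `(a + b) / 2` times an even function of `t`:
`T(a, b) = (a + b) / 2 · t / arctan t`, and the centroidal mean of the two weighted averages is
`(a + b) / 2 · (1 + c t²)` with `c = (2λ - 1)² / 3 = 4 / π - 1`. So the claim is
`arctan t < t / (1 + c t²)` for `0 < t < 1`. The difference `g t = t / (1 + c t²) - arctan t`
vanishes at `0` and (by the choice of `c`) at `1`, and `g'` has the sign of `1 - 3c - c (1 + c) t²`,
so `g` increases and then decreases on `[0, 1]` and is therefore positive in between.
-/

section ArctanBound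

variable {c : ℝ}

lemma hasDerivAt_div_one_add_mul_sq_sub_arctan (hc : 0 ≤ c) (x : ℝ) :
    HasDerivAt (fun x => x / (1 + c * x ^ 2) - arctan x)
      (x ^ 2 * (1 - 3 * c - c * (1 + c) * x ^ 2) / ((1 + c * x ^ 2) ^ 2 * (1 + x ^ 2))) x := by
  have hden : 1 + c * x ^ 2 ≠ 0 := by positivity
  have hquot : HasDerivAt (fun x => x / (1 + c * x ^ 2))
      ((1 * (1 + c * x ^ 2) - x * (c * (2 * x))) / (1 + c * x ^ 2) ^ 2) x := by
    refine (hasDerivAt_id x).div ?_ hden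
    simpa using ((hasDerivAt_pow 2 x).const_mul c).const_add 1
  refine (hquot.sub (hasDerivAt_arctan x)).congr_deriv ?_
  have : 1 + x ^ 2 ≠ 0 := by positivity
  field_simp
  ring

lemma arctan_lt_div_one_add_mul_sq (hc : 0 < c) (hc3 : 3 * c < 1) (hcπ : (1 + c) * π ≤ 4)
    {t : ℝ} (ht0 : 0 < t) (ht1 : t < 1) :
    arctan t < t / (1 + c * t ^ 2) := by
  set g : ℝ → ℝ := fun x => x / (1 + c * x ^ 2) - arctan x
  have hg' := hasDerivAt_div_one_add_mul_sq_sub_arctan hc.le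
  have hg : Continuous g := continuous_iff_continuousAt.2 fun x => (hg' x).continuousAt
  have hden : ∀ x, 0 < (1 + c * x ^ 2) ^ 2 * (1 + x ^ 2) := fun x => by positivity
  have hcc : 0 < c * (1 + c) := by positivity
  -- `g'` changes sign at `m`, where `c (1 + c) m² = 1 - 3c`.
  set m := √((1 - 3 * c) / (c * (1 + c)))
  have hm : 0 < m := sqrt_pos.2 (div_pos (by linarith) hcc)
  have hm2 : c * (1 + c) * m ^ 2 = 1 - 3 * c := by
    rw [sq_sqrt (div_pos (by linarith) hcc).le, mul_div_cancel₀ _ hcc.ne']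
  have hmono : StrictMonoOn g (Set.Icc 0 m) := by
    refine strictMonoOn_of_deriv_pos (convex_Icc 0 m) hg.continuousOn fun x hx => ?_
    rw [interior_Icc] at hx
    rw [(hg' x).deriv]
    have := mul_lt_mul_of_pos_left (pow_lt_pow_left₀ hx.2 hx.1.le two_ne_zero) hcc
    exact div_pos (mul_pos (pow_pos hx.1 2) (by linarith)) (hden x)
  have hanti : StrictAntiOn g (Set.Ici m) := by
    refine strictAntiOn_of_deriv_neg (convex_Ici m) hg.continuousOn fun x hx => ?_
    rw [interior_Ici] at hx
    rw [(hg' x).deriv]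
    have := mul_lt_mul_of_pos_left (pow_lt_pow_left₀ hx hm.le two_ne_zero) hcc
    exact div_neg_of_neg_of_pos
      (mul_neg_of_pos_of_neg (pow_pos (hm.trans hx) 2) (by linarith)) (hden x)
  have hg0 : g 0 = 0 := by simp [g]
  have hg1 : 0 ≤ g 1 := by
    simp only [g, arctan_one, one_pow, mul_one, sub_nonneg]
    rw [le_div_iff₀ (by positivity)]
    linarith
  suffices 0 < g t by simpa [g] using this
  rcases le_or_gt t m with htm | htm
  · exact hg0 ▸ hmono ⟨le_rfl, hm.le⟩ ⟨ht0.le, htm⟩ ht0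
  · exact hg1.trans_lt (hanti htm.le (htm.trans ht1).le ht1)

lemma one_add_mul_sq_lt_div_arctan (hc : 0 < c) (hc3 : 3 * c < 1) (hcπ : (1 + c) * π ≤ 4)
    {t : ℝ} (ht0 : t ≠ 0) (ht1 : |t| < 1) :
    1 + c * t ^ 2 < t / arctan t := by
  have key : ∀ s, 0 < s → s < 1 → 1 + c * s ^ 2 < s / arctan s := fun s hs0 hs1 => by
    rw [lt_div_iff₀ (arctan_pos.2 hs0), mul_comm, ← lt_div_iff₀ (by positivity)]
    exact arctan_lt_div_one_add_mul_sq hc hc3 hcπ hs0 hs1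
  rcases ht0.lt_or_gt with hneg | hpos
  · rw [← neg_div_neg_eq, ← arctan_neg, ← neg_sq]
    exact key (-t) (neg_pos.2 hneg) (by rwa [abs_of_neg hneg] at ht1)
  · exact key t hpos (by rwa [abs_of_pos hpos] at ht1)

end ArctanBound

lemma seiffertT_eq_mul_div_arctan {a b : ℝ} (h : a + b ≠ 0) :
    seiffertT a b = (a + b) / 2 * ((a - b) / (a + b) / arctan ((a - b) / (a + b))) := by
  rw [seiffertT]
  set t := (a - b) / (a + b)
  rw [show a - b = (a + b) * t from (mul_div_cancel₀ _ h).symm]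
  ring

lemma centroidalMean_weighted (l : ℝ) {a b : ℝ} (h : a + b ≠ 0) :
    centroidalMean (l * a + (1 - l) * b) (l * b + (1 - l) * a)
      = (a + b) / 2 * (1 + (2 * l - 1) ^ 2 / 3 * ((a - b) / (a + b)) ^ 2) := by
  have : l * a + (1 - l) * b + (l * b + (1 - l) * a) = a + b := by ring
  rw [centroidalMean, this]
  field_simp
  ring

theorem stmt_0 (a b : ℝ) (ha : 0 < a) (hb : 0 < b) (hab : a ≠ b) :
    centroidalMean
        (((1 + Real.sqrt (12 / π - 3)) / 2) * a + (1 - (1 + Real.sqrt (12 / π - 3)) / 2) * b)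
        (((1 + Real.sqrt (12 / π - 3)) / 2) * b + (1 - (1 + Real.sqrt (12 / π - 3)) / 2) * a)
      < seiffertT a b := by
  have hs : 0 < a + b := by linarith
  have hc : (2 * ((1 + √(12 / π - 3)) / 2) - 1) ^ 2 / 3 = 4 / π - 1 := by
    have : 0 ≤ 12 / π - 3 := by
      rw [sub_nonneg, le_div_iff₀ pi_pos]; linarith [pi_lt_four]
    rw [show 2 * ((1 + √(12 / π - 3)) / 2) - 1 = √(12 / π - 3) by ring, sq_sqrt this]
    ring
  rw [centroidalMean_weighted _ hs.ne', seiffertT_eq_mul_div_arctan hs.ne', hc]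
  refine mul_lt_mul_of_pos_left (one_add_mul_sq_lt_div_arctan ?_ ?_ ?_ ?_ ?_) (by positivity)
  · rw [sub_pos, lt_div_iff₀ pi_pos]; linarith [pi_lt_four]
  · rw [mul_sub, mul_div_assoc', sub_lt_iff_lt_add, div_lt_iff₀ pi_pos]; linarith [pi_gt_three]
  · rw [add_sub_cancel, div_mul_cancel₀ _ pi_pos.ne']
  · exact div_ne_zero (sub_ne_zero.2 hab) hs.ne'
  · rw [abs_div, abs_of_pos hs, div_lt_one hs, abs_sub_lt_iff]
    constructor <;> linarith
end

section
/- For all positive real numbers a, b with a ≠ b, the strict inequality T(a,b) < C̄(a,b) holds. -/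
open Real

/-!
With `x = (a - b) / (a + b)` one has `C̄(a, b) = (a - b) / (2 · 3x / (3 + x²))`, while
`T(a, b) = (a - b) / (2 · arctan x)`. So for `a > b` the inequality is the Padé bound
`3x / (3 + x²) < arctan x` for `x > 0`: the difference vanishes at `0` and has derivative
`4x⁴ / ((1 + x²)(3 + x²)²) > 0`. The case `a < b` follows by symmetry of both means.
-/

lemma hasDerivAt_arctan_sub_three_mul_div (y : ℝ) :
    HasDerivAt (fun y : ℝ => arctan y - 3 * y / (3 + y ^ 2))
      (4 * y ^ 4 / ((1 + y ^ 2) * (3 + y ^ 2) ^ 2)) y := by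
  have hlin : HasDerivAt (fun y : ℝ => 3 * y) 3 y := by
    simpa using (hasDerivAt_id y).const_mul 3
  have hquad : HasDerivAt (fun y : ℝ => 3 + y ^ 2) (2 * y) y := by
    simpa using (hasDerivAt_pow 2 y).const_add 3
  refine ((hasDerivAt_arctan y).sub (hlin.div hquad (by positivity))).congr_deriv ?_
  have : 1 + y ^ 2 ≠ 0 := by positivity
  field_simp
  ring

lemma strictMonoOn_arctan_sub_three_mul_div :
    StrictMonoOn (fun y : ℝ => arctan y - 3 * y / (3 + y ^ 2)) (Set.Ici 0) := by
  refine strictMonoOn_of_deriv_pos (convex_Ici 0) ?_ fun y hy => ?_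
  · exact (continuous_arctan.sub <| by fun_prop (disch := intro; positivity)).continuousOn
  · rw [interior_Ici] at hy
    rw [(hasDerivAt_arctan_sub_three_mul_div y).deriv]
    have : 0 < y ^ 4 := pow_pos hy 4
    positivity

lemma three_mul_div_three_add_sq_lt_arctan {x : ℝ} (hx : 0 < x) :
    3 * x / (3 + x ^ 2) < arctan x := by
  have := strictMonoOn_arctan_sub_three_mul_div Set.self_mem_Ici hx.le hx
  simp only [arctan_zero, mul_zero, zero_div, sub_zero] at this
  linarith

lemma seiffertT_comm (a b : ℝ) : seiffertT a b = seiffertT b a := by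
  have : (b - a) / (b + a) = -((a - b) / (a + b)) := by
    rw [add_comm b a, ← neg_div, neg_sub]
  rw [seiffertT, seiffertT, this, arctan_neg, mul_neg, div_neg, ← neg_div, neg_sub]

lemma centroidalMean_comm (a b : ℝ) : centroidalMean a b = centroidalMean b a := by
  unfold centroidalMean
  ring

lemma centroidalMean_eq_div_pade {a b : ℝ} (hab : a ≠ b) (hsum : a + b ≠ 0) :
    centroidalMean a b =
      (a - b) / (2 * (3 * ((a - b) / (a + b)) / (3 + ((a - b) / (a + b)) ^ 2))) := by
  have : a - b ≠ 0 := sub_ne_zero.mpr hab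
  have : 3 + ((a - b) / (a + b)) ^ 2 ≠ 0 := by positivity
  unfold centroidalMean
  field_simp
  ring

lemma seiffertT_lt_centroidalMean_of_lt {a b : ℝ} (hb : 0 < b) (hba : b < a) :
    seiffertT a b < centroidalMean a b := by
  have hsub : 0 < a - b := sub_pos.mpr hba
  have hx : 0 < (a - b) / (a + b) := div_pos hsub (by linarith)
  have hpade := three_mul_div_three_add_sq_lt_arctan hx
  have hpade_pos : 0 < 3 * ((a - b) / (a + b)) / (3 + ((a - b) / (a + b)) ^ 2) := by positivity
  rw [centroidalMean_eq_div_pade hba.ne' (by linarith), seiffertT]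
  exact div_lt_div_of_pos_left hsub (by linarith) (by linarith)

theorem stmt_1 (a b : ℝ) (ha : 0 < a) (hb : 0 < b) (hab : a ≠ b) :
    seiffertT a b < centroidalMean a b := by
  rcases hab.lt_or_gt with hab | hba
  · rw [seiffertT_comm, centroidalMean_comm]
    exact seiffertT_lt_centroidalMean_of_lt ha hab
  · exact seiffertT_lt_centroidalMean_of_lt hb hba
end

section
/- For every real number p with (1 + √(12/π − 3))/2 < p < 1, there exist positive real numbers a, b with a ≠ b such that C̄(p·a + (1−p)·b, p·b + (1−p)·a) > T(a,b); that is, the constant λ = (1 + √(12/π − 3))/2 in the lower bound C̄(λ·a + (1−λ)·b, λ·b + (1−λ)·a) < T(a,b) cannot be replaced by any larger value of the parameter in [1/2, 1]. -/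
open Real

/-!
Both means extend continuously to the boundary point `(a, b) = (1, 0)`, where the Seiffert mean
equals `1 / (2 arctan 1) = 2 / π` while the centroidal mean at `(p, 1 - p)` equals
`2 (p² - p + 1) / 3`. Since `4 (p² - p + 1) = (2p - 1)² + 3`, the hypothesis on `p` gives
`2 / π < 2 (p² - p + 1) / 3`, and the strict inequality persists for all small `b > 0`.
-/

open Topology

section Continuity

variable {f g : ℝ → ℝ} {x : ℝ}

theorem ContinuousAt.centroidalMean (hf : ContinuousAt f x) (hg : ContinuousAt g x)
    (hfg : f x + g x ≠ 0) : ContinuousAt (fun y => centroidalMean (f y) (g y)) x := by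
  unfold _root_.centroidalMean
  exact ContinuousAt.div (by fun_prop) (by fun_prop) (by simpa using hfg)

theorem ContinuousAt.seiffertT (hf : ContinuousAt f x) (hg : ContinuousAt g x)
    (hfg : f x + g x ≠ 0) (hne : f x ≠ g x) :
    ContinuousAt (fun y => seiffertT (f y) (g y)) x := by
  have hquot : ContinuousAt (fun y => (f y - g y) / (f y + g y)) x :=
    (hf.sub hg).div (hf.add hg) hfg
  have harctan : arctan ((f x - g x) / (f x + g x)) ≠ 0 := by
    rw [Ne, arctan_eq_zero_iff, div_eq_zero_iff, sub_eq_zero]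
    tauto
  exact (hf.sub hg).div (continuousAt_const.mul (continuous_arctan.continuousAt.comp hquot))
    (mul_ne_zero two_ne_zero harctan)

end Continuity

theorem centroidalMean_self_add_one_sub (p : ℝ) :
    centroidalMean p (1 - p) = 2 * (p ^ 2 - p + 1) / 3 := by
  unfold centroidalMean
  ring_nf

theorem seiffertT_one_zero : seiffertT 1 0 = 2 / π := by
  simp only [seiffertT, sub_zero, add_zero, div_one, arctan_one]
  field_simp
  ring

theorem three_div_pi_lt_sq_sub_add_one (p : ℝ) (hp : (1 + √(12 / π - 3)) / 2 < p) :
    3 / π < p ^ 2 - p + 1 := by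
  have hsqrt : √(12 / π - 3) < 2 * p - 1 := by linarith
  have hsq := (sqrt_lt' (by linarith [sqrt_nonneg (12 / π - 3)])).mp hsqrt
  have h12 : (12 : ℝ) / π = 4 * (3 / π) := by ring
  nlinarith

theorem stmt_2_general (p : ℝ) (hp₁ : (1 + Real.sqrt (12 / π - 3)) / 2 < p) :
    ∃ a b : ℝ, 0 < a ∧ 0 < b ∧ a ≠ b ∧
      centroidalMean (p * a + (1 - p) * b) (p * b + (1 - p) * a) > seiffertT a b := by
  set F : ℝ → ℝ := fun b => centroidalMean (p * 1 + (1 - p) * b) (p * b + (1 - p) * 1)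
  have hF : ContinuousAt F 0 := ContinuousAt.centroidalMean (by fun_prop) (by fun_prop) (by simp)
  have hT : ContinuousAt (fun b => seiffertT 1 b) 0 :=
    ContinuousAt.seiffertT continuousAt_const continuousAt_id (by simp) (by simp)
  have hlimit : seiffertT 1 0 < F 0 := by
    have hF0 : F 0 = centroidalMean p (1 - p) := by simp [F]
    rw [hF0, centroidalMean_self_add_one_sub, seiffertT_one_zero,
      div_lt_div_iff₀ pi_pos three_pos]
    linarith [(div_lt_iff₀ pi_pos).mp (three_div_pi_lt_sq_sub_add_one p hp₁)]
  have hnear : ∀ᶠ b in 𝓝[>] (0 : ℝ), 0 < b ∧ b ≠ 1 ∧ seiffertT 1 b < F b :=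
    eventually_mem_nhdsWithin.and <| nhdsWithin_le_nhds <|
      (eventually_ne_nhds zero_ne_one).and (hT.eventually_lt hF hlimit)
  obtain ⟨b, hb, hb1, hbF⟩ := hnear.exists
  exact ⟨1, b, one_pos, hb, Ne.symm hb1, by simpa [F] using hbF⟩

theorem stmt_2 (p : ℝ) (hp₁ : (1 + Real.sqrt (12 / π - 3)) / 2 < p) (hp₂ : p < 1) :
    ∃ a b : ℝ, 0 < a ∧ 0 < b ∧ a ≠ b ∧
      centroidalMean (p * a + (1 - p) * b) (p * b + (1 - p) * a) > seiffertT a b :=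
  stmt_2_general p hp₁
end

section
/- For every real number p with 1/2 < p < 1, there exist positive real numbers a, b with a ≠ b such that T(a,b) > C̄(p·a + (1−p)·b, p·b + (1−p)·a); that is, β = 1 is the only value of the parameter in [1/2, 1] for which the upper bound T(a,b) < C̄(β·a + (1−β)·b, β·b + (1−β)·a) holds for all a ≠ b. -/
open Real

/-!
On the pairs `(1 + t, 1 - t)` the Seiffert mean is `t / arctan t`, and with `q = 2p - 1` the
shifted centroidal mean is `1 + q²t²/3`. Since `t / arctan t = 1 + t²/3 + O(t⁴)` and `q² < 1`,
the Seiffert mean wins for small `t`; the fifth-order Taylor bound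
`arctan t < t - t³/3 + t⁵/5` makes this quantitative, and `t = 1 - q²` is small enough.
-/

lemma arctan_lt_taylor_five {x : ℝ} (hx : 0 < x) : arctan x < x - x ^ 3 / 3 + x ^ 5 / 5 := by
  set g : ℝ → ℝ := fun y ↦ y - y ^ 3 / 3 + y ^ 5 / 5 - arctan y
  -- `1 - y² + y⁴ - 1 / (1 + y²) = y⁶ / (1 + y²)`
  have hg : ∀ y, HasDerivAt g (y ^ 6 / (1 + y ^ 2)) y := fun y ↦ by
    refine ((((hasDerivAt_id' y).sub ((hasDerivAt_pow 3 y).div_const 3)).add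
      ((hasDerivAt_pow 5 y).div_const 5)).sub (hasDerivAt_arctan y)).congr_deriv ?_
    field_simp
    ring
  have hmono : StrictMonoOn g (Set.Ici 0) := by
    refine strictMonoOn_of_deriv_pos (convex_Ici 0)
      (fun y _ ↦ (hg y).continuousAt.continuousWithinAt) fun y hy ↦ ?_
    rw [interior_Ici] at hy
    have : 0 < y := hy
    rw [(hg y).deriv]
    positivity
  have := hmono Set.self_mem_Ici hx.le hx
  simp only [g, arctan_zero] at this
  linarith

lemma seiffertT_one_add_one_sub (t : ℝ) : seiffertT (1 + t) (1 - t) = t / arctan t := by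
  rw [seiffertT, show (1 + t - (1 - t)) / (1 + t + (1 - t)) = t by ring]
  ring

lemma centroidalMean_one_add_one_sub (s : ℝ) :
    centroidalMean (1 + s) (1 - s) = 1 + s ^ 2 / 3 := by
  rw [centroidalMean]
  field_simp
  ring

lemma one_add_mul_sq_div_three_lt_div_arctan {c t : ℝ} (hc : 0 ≤ c) (ht : 0 < t)
    (htc : t ≤ 1 - c) : 1 + c * t ^ 2 / 3 < t / arctan t := by
  have hat : 0 < arctan t := arctan_pos.mpr ht
  rw [lt_div_iff₀ hat]
  -- expanded, this is `t⁴ (1/5 - c/9 + c t²/15) ≤ (1 - c) t²/3`, and `t² ≤ t ≤ 1 - c`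
  have hpoly : (1 + c * t ^ 2 / 3) * (t - t ^ 3 / 3 + t ^ 5 / 5) ≤ t := by
    have : t ^ 2 ≤ 1 - c := by nlinarith
    nlinarith [pow_pos ht 3, pow_pos ht 5, mul_nonneg hc (pow_pos ht 5).le]
  calc (1 + c * t ^ 2 / 3) * arctan t
      < (1 + c * t ^ 2 / 3) * (t - t ^ 3 / 3 + t ^ 5 / 5) := by
        gcongr
        exact arctan_lt_taylor_five ht
    _ ≤ t := hpoly

theorem stmt_3 (p : ℝ) (hp₁ : 1 / 2 < p) (hp₂ : p < 1) :
    ∃ a b : ℝ, 0 < a ∧ 0 < b ∧ a ≠ b ∧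
      seiffertT a b > centroidalMean (p * a + (1 - p) * b) (p * b + (1 - p) * a) := by
  set q := 2 * p - 1
  have hq₀ : 0 < q := by linarith
  have hq₁ : q < 1 := by linarith
  set t := 1 - q ^ 2
  have ht₀ : 0 < t := by nlinarith
  have ht₁ : t < 1 := by nlinarith
  refine ⟨1 + t, 1 - t, by linarith, by linarith, by linarith, ?_⟩
  rw [show p * (1 + t) + (1 - p) * (1 - t) = 1 + q * t by ring,
    show p * (1 - t) + (1 - p) * (1 + t) = 1 - q * t by ring,
    seiffertT_one_add_one_sub, centroidalMean_one_add_one_sub, mul_pow]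
  exact one_add_mul_sq_div_three_lt_div_arctan (sq_nonneg q) ht₀ le_rfl
end

section
/- Let α, β ∈ [1/2, 1]. The double inequality C̄(α·a + (1−α)·b, α·b + (1−α)·a) < T(a,b) < C̄(β·a + (1−β)·b, β·b + (1−β)·a) holds for all positive real numbers a, b with a ≠ b if and only if α ≤ (1 + √(12/π − 3))/2 and β = 1. -/
open Real

/-!
Put `u = (a - b) / (a + b) ∈ (0, 1)` and `λ = 2γ - 1`. The mixed centroidal mean equals
`(a + b)(3 + λ²u²)/6` and `T(a, b) = (a + b)u / (2 arctan u)`, so each comparison is decided by the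
sign of `arctanGap λ² u = arctan u - 3u / (3 + λ²u²)`. The derivative of `arctanGap c` has the sign
of `(c² + 3c)u² - 9(1 - c)`. For `c = 1` it is positive, so `arctanGap 1 > 0`; for `c < 1` it is
negative near `0`, so `arctanGap c` is negative near `0`. The critical `c = 12/π - 3` is the one
with `arctanGap c 1 = 0`: then `arctanGap c` vanishes at `0` and `1`, first decreases and then
increases, hence is negative on `(0, 1)`; for larger `c`, `arctanGap c 1 > 0` persists just
below `1`.
-/

noncomputable def arctanGap (c u : ℝ) : ℝ := arctan u - 3 * u / (3 + c * u ^ 2)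

lemma arctanGap_zero (c : ℝ) : arctanGap c 0 = 0 := by simp [arctanGap]

lemma hasDerivAt_arctanGap {c : ℝ} (hc : 0 ≤ c) (u : ℝ) :
    HasDerivAt (arctanGap c)
      (u ^ 2 * ((c ^ 2 + 3 * c) * u ^ 2 - 9 * (1 - c)) / ((1 + u ^ 2) * (3 + c * u ^ 2) ^ 2))
      u := by
  have hden : 3 + c * u ^ 2 ≠ 0 := by positivity
  have hrat := ((hasDerivAt_id' u).const_mul 3).div
    (((hasDerivAt_pow 2 u).const_mul c).const_add 3) hden
  refine ((hasDerivAt_arctan u).sub hrat).congr_deriv ?_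
  field_simp
  ring

lemma continuous_arctanGap {c : ℝ} (hc : 0 ≤ c) : Continuous (arctanGap c) :=
  continuous_iff_continuousAt.2 fun u => (hasDerivAt_arctanGap hc u).continuousAt

lemma arctanGap_le_arctanGap {c c' u : ℝ} (hc : 0 ≤ c) (hcc' : c ≤ c') (hu : 0 ≤ u) :
    arctanGap c u ≤ arctanGap c' u := by
  unfold arctanGap
  gcongr

lemma neg_of_deriv_neg_of_deriv_pos {g : ℝ → ℝ} {a b s x : ℝ} (hg : ContinuousOn g (Set.Icc a b))
    (hneg : ∀ y ∈ Set.Ioo a b, y < s → deriv g y < 0)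
    (hpos : ∀ y ∈ Set.Ioo a b, s < y → 0 < deriv g y)
    (ha : g a ≤ 0) (hb : g b ≤ 0) (hx : x ∈ Set.Ioo a b) : g x < 0 := by
  rcases le_or_gt x s with hxs | hsx
  · have hanti : StrictAntiOn g (Set.Icc a x) := by
      refine strictAntiOn_of_deriv_neg (convex_Icc a x)
        (hg.mono (Set.Icc_subset_Icc_right hx.2.le)) fun y hy => ?_
      rw [interior_Icc] at hy
      exact hneg y ⟨hy.1, hy.2.trans hx.2⟩ (hy.2.trans_le hxs)
    exact (hanti (Set.left_mem_Icc.2 hx.1.le) (Set.right_mem_Icc.2 hx.1.le) hx.1).trans_le ha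
  · have hmono : StrictMonoOn g (Set.Icc x b) := by
      refine strictMonoOn_of_deriv_pos (convex_Icc x b)
        (hg.mono (Set.Icc_subset_Icc_left hx.1.le)) fun y hy => ?_
      rw [interior_Icc] at hy
      exact hpos y ⟨hx.1.trans hy.1, hy.2⟩ (hsx.trans hy.1)
    exact (hmono (Set.left_mem_Icc.2 hx.2.le) (Set.right_mem_Icc.2 hx.2.le) hx.2).trans_le hb

lemma arctanGap_one_pos {u : ℝ} (hu : 0 < u) : 0 < arctanGap 1 u := by
  have hmono : StrictMonoOn (arctanGap 1) (Set.Ici 0) := by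
    refine strictMonoOn_of_deriv_pos (convex_Ici 0)
      (continuous_arctanGap zero_le_one).continuousOn fun x hx => ?_
    rw [interior_Ici] at hx
    have hx : 0 < x := hx
    rw [(hasDerivAt_arctanGap zero_le_one x).deriv]
    norm_num
    positivity
  simpa [arctanGap_zero] using hmono Set.self_mem_Ici hu.le hu

lemma arctanGap_critical_one : arctanGap (12 / π - 3) 1 = 0 := by
  simp only [arctanGap, arctan_one]
  field_simp
  ring

lemma twelve_div_pi_sub_three_pos : 0 < 12 / π - 3 := by
  rw [sub_pos, lt_div_iff₀ pi_pos]
  linarith [pi_lt_four]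

lemma arctanGap_critical_neg {u : ℝ} (hu : u ∈ Set.Ioo 0 1) : arctanGap (12 / π - 3) u < 0 := by
  set c := 12 / π - 3
  have hc : 0 < c := twelve_div_pi_sub_three_pos
  have hden : 0 < c ^ 2 + 3 * c := by positivity
  have hderiv (y : ℝ) (hy : 0 < y) :
      deriv (arctanGap c) y = y ^ 2 / ((1 + y ^ 2) * (3 + c * y ^ 2) ^ 2) *
        ((c ^ 2 + 3 * c) * y ^ 2 - 9 * (1 - c)) := by
    rw [(hasDerivAt_arctanGap hc.le y).deriv]
    ring
  refine neg_of_deriv_neg_of_deriv_pos (s := √(9 * (1 - c) / (c ^ 2 + 3 * c)))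
    (continuous_arctanGap hc.le).continuousOn (fun y hy hys => ?_) (fun y hy hsy => ?_)
    (arctanGap_zero c).le arctanGap_critical_one.le hu
  · rw [lt_sqrt hy.1.le, lt_div_iff₀ hden] at hys
    rw [hderiv y hy.1]
    exact mul_neg_of_pos_of_neg (by have := hy.1; positivity) (by linarith)
  · rw [sqrt_lt' hy.1, div_lt_iff₀ hden] at hsy
    rw [hderiv y hy.1]
    exact mul_pos (by have := hy.1; positivity) (by linarith)

lemma exists_arctanGap_neg {c : ℝ} (hc : 0 ≤ c) (hc1 : c < 1) :
    ∃ u ∈ Set.Ioo (0 : ℝ) 1, arctanGap c u < 0 := by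
  set s := min (1 / 2) (1 - c)
  have hs : 0 < s := lt_min (by norm_num) (by linarith)
  have hanti : StrictAntiOn (arctanGap c) (Set.Icc 0 s) := by
    refine strictAntiOn_of_deriv_neg (convex_Icc 0 s)
      (continuous_arctanGap hc).continuousOn fun y hy => ?_
    rw [interior_Icc] at hy
    obtain ⟨hy0, hys⟩ := hy
    have hy2 : y < 1 / 2 := hys.trans_le (min_le_left _ _)
    have hyc : y < 1 - c := hys.trans_le (min_le_right _ _)
    rw [(hasDerivAt_arctanGap hc y).deriv]
    refine div_neg_of_neg_of_pos (mul_neg_of_pos_of_neg (by positivity) ?_) (by positivity)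
    have hy_sq : y ^ 2 < (1 - c) / 2 := by nlinarith
    have hcoef : c ^ 2 + 3 * c ≤ 4 := by nlinarith
    nlinarith [mul_le_mul_of_nonneg_right hcoef (sq_nonneg y)]
  refine ⟨s, ⟨hs, (min_le_left _ _).trans_lt (by norm_num)⟩, ?_⟩
  simpa [arctanGap_zero] using hanti (Set.left_mem_Icc.2 hs.le) (Set.right_mem_Icc.2 hs.le) hs

lemma exists_arctanGap_pos {c : ℝ} (hc : 12 / π - 3 < c) :
    ∃ u ∈ Set.Ioo (0 : ℝ) 1, 0 < arctanGap c u := by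
  have hc0 : 0 ≤ c := twelve_div_pi_sub_three_pos.le.trans hc.le
  have hone : 0 < arctanGap c 1 := by
    rw [← arctanGap_critical_one]
    simp only [arctanGap, one_pow, mul_one]
    gcongr
    linarith [div_pos (by norm_num : (0 : ℝ) < 12) pi_pos]
  have hev : ∀ᶠ u in nhdsWithin (1 : ℝ) (Set.Iio 1), 0 < arctanGap c u ∧ u ∈ Set.Ioo 0 1 :=
    (((continuous_arctanGap hc0).continuousAt.eventually (eventually_gt_nhds hone)).filter_mono
      nhdsWithin_le_nhds).and (Ioo_mem_nhdsLT zero_lt_one)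
  obtain ⟨u, hpos, hu⟩ := hev.exists
  exact ⟨u, hu, hpos⟩

lemma centroidalMean_sub_seiffertT (γ : ℝ) {a b : ℝ} (hab : a + b ≠ 0) (hne : a ≠ b) :
    centroidalMean (γ * a + (1 - γ) * b) (γ * b + (1 - γ) * a) - seiffertT a b =
      (a + b) * (3 + (2 * γ - 1) ^ 2 * ((a - b) / (a + b)) ^ 2) /
          (6 * arctan ((a - b) / (a + b))) *
        arctanGap ((2 * γ - 1) ^ 2) ((a - b) / (a + b)) := by
  set u := (a - b) / (a + b) with hu
  have hdiff : a - b = (a + b) * u := by rw [hu]; field_simp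
  have harctan : arctan u ≠ 0 := by
    rw [Ne, arctan_eq_zero_iff, hu, div_eq_zero_iff, sub_eq_zero]
    tauto
  have hden : 3 + (2 * γ - 1) ^ 2 * u ^ 2 ≠ 0 := by positivity
  have hmean : centroidalMean (γ * a + (1 - γ) * b) (γ * b + (1 - γ) * a) =
      (a + b) * (3 + (2 * γ - 1) ^ 2 * u ^ 2) / 6 := by
    unfold centroidalMean
    rw [show γ * a + (1 - γ) * b + (γ * b + (1 - γ) * a) = a + b by ring, hu]
    field_simp
    ring
  rw [hmean, seiffertT, ← hu, hdiff, arctanGap]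
  field_simp
  ring

lemma exists_pos_centroidalMean_sub_seiffertT_eq (γ : ℝ) {a b : ℝ} (hb : 0 < b) (hba : b < a) :
    ∃ K > 0, centroidalMean (γ * a + (1 - γ) * b) (γ * b + (1 - γ) * a) - seiffertT a b =
      K * arctanGap ((2 * γ - 1) ^ 2) ((a - b) / (a + b)) := by
  have hab : 0 < a + b := by linarith
  have harctan : 0 < arctan ((a - b) / (a + b)) := arctan_pos.2 (div_pos (by linarith) hab)
  exact ⟨_, by positivity, centroidalMean_sub_seiffertT γ hab.ne' hba.ne'⟩

lemma centroidalMean_lt_seiffertT_iff (γ : ℝ) {a b : ℝ} (hb : 0 < b) (hba : b < a) :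
    centroidalMean (γ * a + (1 - γ) * b) (γ * b + (1 - γ) * a) < seiffertT a b ↔
      arctanGap ((2 * γ - 1) ^ 2) ((a - b) / (a + b)) < 0 := by
  obtain ⟨K, hK, hsub⟩ := exists_pos_centroidalMean_sub_seiffertT_eq γ hb hba
  rw [← sub_neg, hsub]
  exact ⟨fun h => neg_of_mul_neg_right h hK.le, mul_neg_of_pos_of_neg hK⟩

lemma seiffertT_lt_centroidalMean_iff (γ : ℝ) {a b : ℝ} (hb : 0 < b) (hba : b < a) :
    seiffertT a b < centroidalMean (γ * a + (1 - γ) * b) (γ * b + (1 - γ) * a) ↔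
      0 < arctanGap ((2 * γ - 1) ^ 2) ((a - b) / (a + b)) := by
  obtain ⟨K, hK, hsub⟩ := exists_pos_centroidalMean_sub_seiffertT_eq γ hb hba
  rw [← sub_pos, hsub, mul_pos_iff_of_pos_left hK]

lemma exists_not_centroidalMean_lt_seiffertT {α : ℝ} (hα : 12 / π - 3 < (2 * α - 1) ^ 2) :
    ∃ a b : ℝ, 0 < a ∧ 0 < b ∧ a ≠ b ∧
      ¬ centroidalMean (α * a + (1 - α) * b) (α * b + (1 - α) * a) < seiffertT a b := by
  obtain ⟨u, ⟨hu0, hu1⟩, hpos⟩ := exists_arctanGap_pos hα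
  refine ⟨1 + u, 1 - u, by linarith, by linarith, by linarith, ?_⟩
  rw [centroidalMean_lt_seiffertT_iff α (by linarith) (by linarith),
    show (1 + u - (1 - u)) / (1 + u + (1 - u)) = u by ring]
  exact hpos.not_gt

lemma exists_not_seiffertT_lt_centroidalMean {β : ℝ} (hβ : (2 * β - 1) ^ 2 < 1) :
    ∃ a b : ℝ, 0 < a ∧ 0 < b ∧ a ≠ b ∧
      ¬ seiffertT a b < centroidalMean (β * a + (1 - β) * b) (β * b + (1 - β) * a) := by
  obtain ⟨u, ⟨hu0, hu1⟩, hneg⟩ := exists_arctanGap_neg (sq_nonneg _) hβ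
  refine ⟨1 + u, 1 - u, by linarith, by linarith, by linarith, ?_⟩
  rw [seiffertT_lt_centroidalMean_iff β (by linarith) (by linarith),
    show (1 + u - (1 - u)) / (1 + u + (1 - u)) = u by ring]
  exact hneg.not_gt

lemma centroidalMean_lt_seiffertT_lt_centroidalMean {α a b : ℝ}
    (hα : (2 * α - 1) ^ 2 ≤ 12 / π - 3) (ha : 0 < a) (hb : 0 < b) (hab : a ≠ b) :
    centroidalMean (α * a + (1 - α) * b) (α * b + (1 - α) * a) < seiffertT a b ∧
      seiffertT a b < centroidalMean a b := by
  wlog hba : b < a generalizing a b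
  · rw [seiffertT_comm, centroidalMean_comm, centroidalMean_comm a]
    exact this hb ha hab.symm (hab.lt_or_gt.resolve_right hba)
  have hu : (a - b) / (a + b) ∈ Set.Ioo 0 1 :=
    ⟨div_pos (by linarith) (by linarith), (div_lt_one (by linarith)).2 (by linarith)⟩
  constructor
  · rw [centroidalMean_lt_seiffertT_iff α hb hba]
    exact (arctanGap_le_arctanGap (sq_nonneg _) hα hu.1.le).trans_lt (arctanGap_critical_neg hu)
  · simpa using (seiffertT_lt_centroidalMean_iff 1 hb hba).2 (by norm_num [arctanGap_one_pos hu.1])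

theorem stmt_4 (α β : ℝ) (hα : α ∈ Set.Icc (1 / 2 : ℝ) 1) (hβ : β ∈ Set.Icc (1 / 2 : ℝ) 1) :
    (∀ a b : ℝ, 0 < a → 0 < b → a ≠ b →
        centroidalMean (α * a + (1 - α) * b) (α * b + (1 - α) * a) < seiffertT a b ∧
        seiffertT a b < centroidalMean (β * a + (1 - β) * b) (β * b + (1 - β) * a)) ↔
      (α ≤ (1 + Real.sqrt (12 / π - 3)) / 2 ∧ β = 1) := by
  have hα_iff : α ≤ (1 + √(12 / π - 3)) / 2 ↔ (2 * α - 1) ^ 2 ≤ 12 / π - 3 := by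
    rw [← le_sqrt (by linarith [hα.1]) twelve_div_pi_sub_three_pos.le]
    constructor <;> intro h <;> linarith
  rw [hα_iff]
  constructor
  · intro H
    constructor
    · by_contra! hlt
      obtain ⟨a, b, ha, hb, hab, hfail⟩ := exists_not_centroidalMean_lt_seiffertT hlt
      exact hfail (H a b ha hb hab).1
    · by_contra hne
      have hlt : (2 * β - 1) ^ 2 < 1 := by nlinarith [hβ.1, lt_of_le_of_ne hβ.2 hne]
      obtain ⟨a, b, ha, hb, hab, hfail⟩ := exists_not_seiffertT_lt_centroidalMean hlt
      exact hfail (H a b ha hb hab).2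
  · rintro ⟨hα_le, rfl⟩ a b ha hb hab
    simpa using centroidalMean_lt_seiffertT_lt_centroidalMean hα_le ha hb hab
end

section
/- For all positive real numbers a, b with a ≠ b, the strict inequality T(a,b) < (1/3)·C(a,b) + (2/3)·A(a,b) holds. -/
/-!
Put `t = (a - b) / (a + b) ≠ 0`. Then `T(a,b) = A(a,b) · t / arctan t` and
`C(a,b) = A(a,b) · (1 + t²)`, so the claim is `t / arctan t < 1 + t² / 3`. As `t / arctan t` is even, this is the Padé-type
bound `3t / (3 + t²) < arctan t` for `t > 0`. The difference of the two sides vanishes at `0` and has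
derivative `4t⁴ / ((1 + t²)(3 + t²)²) > 0`.
-/

open Real

noncomputable def arithMean (a b : ℝ) : ℝ := (a + b) / 2

noncomputable def contraharmonicMean (a b : ℝ) : ℝ := (a ^ 2 + b ^ 2) / (a + b)

lemma hasDerivAt_arctan_sub_pade (x : ℝ) :
    HasDerivAt (fun x : ℝ => arctan x - 3 * x / (3 + x ^ 2))
      (4 * x ^ 4 / ((1 + x ^ 2) * (3 + x ^ 2) ^ 2)) x := by
  have hpade : HasDerivAt (fun x : ℝ => 3 * x / (3 + x ^ 2))
      ((3 * (3 + x ^ 2) - 3 * x * (2 * x)) / (3 + x ^ 2) ^ 2) x :=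
    (((hasDerivAt_id x).const_mul 3).div ((hasDerivAt_pow 2 x).const_add 3)
      (by positivity)).congr_deriv (by simp only [id_eq]; ring)
  refine ((hasDerivAt_arctan x).sub hpade).congr_deriv ?_
  field_simp
  ring

lemma pade_lt_arctan {t : ℝ} (ht : 0 < t) : 3 * t / (3 + t ^ 2) < arctan t := by
  have hmono : StrictMonoOn (fun x : ℝ => arctan x - 3 * x / (3 + x ^ 2)) (Set.Ici 0) := by
    refine strictMonoOn_of_deriv_pos (convex_Ici 0) ?_ fun x hx => ?_
    · exact fun x _ => (hasDerivAt_arctan_sub_pade x).continuousAt.continuousWithinAt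
    · rw [interior_Ici, Set.mem_Ioi] at hx
      rw [(hasDerivAt_arctan_sub_pade x).deriv]
      positivity
  simpa using hmono Set.self_mem_Ici (Set.mem_Ici.2 ht.le) ht

lemma div_arctan_lt {t : ℝ} (ht : t ≠ 0) : t / arctan t < 1 + t ^ 2 / 3 := by
  have hpos : ∀ s : ℝ, 0 < s → s / arctan s < 1 + s ^ 2 / 3 := fun s hs =>
    calc s / arctan s < s / (3 * s / (3 + s ^ 2)) :=
          div_lt_div_of_pos_left hs (by positivity) (pade_lt_arctan hs)
      _ = 1 + s ^ 2 / 3 := by field_simp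
  rcases ht.lt_or_gt with hneg | hpos'
  · simpa [arctan_neg, neg_div_neg_eq] using hpos (-t) (neg_pos.2 hneg)
  · exact hpos t hpos'

lemma seiffertT_eq_arithMean_mul {a b : ℝ} (hab : a + b ≠ 0) :
    seiffertT a b = arithMean a b * ((a - b) / (a + b) / arctan ((a - b) / (a + b))) := by
  rw [seiffertT, arithMean]
  field_simp

lemma contraharmonicMean_eq_arithMean_mul {a b : ℝ} (hab : a + b ≠ 0) :
    contraharmonicMean a b = arithMean a b * (1 + ((a - b) / (a + b)) ^ 2) := by
  rw [contraharmonicMean, arithMean]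
  field_simp
  ring

theorem stmt_6 (a b : ℝ) (ha : 0 < a) (hb : 0 < b) (hab : a ≠ b) :
    seiffertT a b < (1 / 3) * contraharmonicMean a b + (2 / 3) * arithMean a b := by
  have hsum : 0 < a + b := add_pos ha hb
  have ht : (a - b) / (a + b) ≠ 0 := div_ne_zero (sub_ne_zero.2 hab) hsum.ne'
  have hA : 0 < arithMean a b := div_pos hsum two_pos
  calc seiffertT a b
      = arithMean a b * ((a - b) / (a + b) / arctan ((a - b) / (a + b))) :=
        seiffertT_eq_arithMean_mul hsum.ne'
    _ < arithMean a b * (1 + ((a - b) / (a + b)) ^ 2 / 3) :=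
        mul_lt_mul_of_pos_left (div_arctan_lt ht) hA
    _ = (1 / 3) * contraharmonicMean a b + (2 / 3) * arithMean a b := by
        rw [contraharmonicMean_eq_arithMean_mul hsum.ne']
        ring
end

section
/- For every real number x with 0 < |x| < π, cot(x) = 1/x − Σ_{n=1}^∞ (2^(2n)·|B₂ₙ|/(2n)!)·x^(2n−1), where the series converges to cot(x). -/
/-!
For `0 < x < π` the partial fraction expansion of the cotangent reads
`1/x - cot x = ∑ₘ 2x / ((m+1)²π² - x²)`. Expanding each term as a geometric series in
`x² / ((m+1)π)²` yields a double series of nonnegative terms, which may therefore be summed in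
the other order. The coefficient of `x^(2k+1)` is then `2 ∑ₘ ((m+1)π)^(-(2k+2))`, which equals
`2^(2k+2) |B₂ₖ₊₂| / (2k+2)!` by Euler's evaluation of `ζ(2k+2)`. Negative `x` follow by oddness.
-/

open Real

theorem Real.hasSum_one_div_sub_cot {x : ℝ} (hx : sin x ≠ 0) :
    HasSum (fun n : ℕ => 2 * x / (((n + 1) * π) ^ 2 - x ^ 2)) (1 / x - cos x / sin x) := by
  have hz : ((x / π : ℝ) : ℂ) ∈ Complex.integerComplement := by
    rintro ⟨n, hn⟩
    apply hx
    rw [← div_mul_cancel₀ x pi_ne_zero,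
      ← Complex.ofReal_inj.mp ((Complex.ofReal_intCast n).trans hn)]
    exact sin_int_mul_pi n
  have h := (summable_cotTerm hz).hasSum.mul_left (-(1 / π : ℂ))
  rw [← cot_series_rep' hz] at h
  rw [← Complex.hasSum_ofReal]
  have hπ : (π : ℂ) ≠ 0 := Complex.ofReal_ne_zero.mpr pi_ne_zero
  have hsum : ((1 / x - cos x / sin x : ℝ) : ℂ) =
      -(1 / π) * (π * Complex.cot (π * (x / π : ℝ)) - 1 / (x / π : ℝ)) := by
    rw [Complex.ofReal_div, mul_div_cancel₀ _ hπ, ← Complex.ofReal_cot, cot_eq_cos_div_sin]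
    push_cast
    field_simp
    ring
  have hterm (n : ℕ) : ((2 * x / (((n + 1) * π) ^ 2 - x ^ 2) : ℝ) : ℂ) =
      -(1 / π) * cotTerm (x / π : ℝ) n := by
    have hp := Complex.integerComplement_add_ne_zero hz (n + 1)
    have hm := Complex.integerComplement_add_ne_zero hz (-(n + 1))
    push_cast at hp hm ⊢
    rw [← sub_eq_add_neg] at hm
    rw [← mul_div_cancel₀ (x : ℂ) hπ]
    generalize (x : ℂ) / π = z at hp hm ⊢
    rw [show ((n + 1) * π : ℂ) ^ 2 - (π * z) ^ 2 = -(π ^ 2 * ((z + (n + 1)) * (z - (n + 1)))) by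
      ring]
    field_simp
    ring
  simpa only [hterm, hsum] using h

theorem hasSum_two_mul_div_sq_sub_sq {x c : ℝ} (h : |x| < |c|) :
    HasSum (fun k : ℕ => 2 * x ^ (2 * k + 1) / c ^ (2 * k + 2)) (2 * x / (c ^ 2 - x ^ 2)) := by
  have hc : c ≠ 0 := by rintro rfl; simp at h; linarith [abs_nonneg x]
  have hsq : x ^ 2 < c ^ 2 := sq_lt_sq.mpr h
  have hr : |x ^ 2 / c ^ 2| < 1 := by
    rwa [abs_of_nonneg (by positivity), div_lt_one (by positivity)]
  have hsub : c ^ 2 - x ^ 2 ≠ 0 := by linarith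
  have hgeom := (hasSum_geometric_of_abs_lt_one hr).mul_left (2 * x / c ^ 2)
  rw [show 2 * x / c ^ 2 * (1 - x ^ 2 / c ^ 2)⁻¹ = 2 * x / (c ^ 2 - x ^ 2) by field_simp] at hgeom
  refine hgeom.congr_fun fun k => ?_
  rw [div_pow, ← pow_mul, ← pow_mul]
  field_simp
  ring

theorem hasSum_zeta_nat_abs_bernoulli {k : ℕ} (hk : k ≠ 0) :
    HasSum (fun n : ℕ => 1 / (n : ℝ) ^ (2 * k))
      ((2 : ℝ) ^ (2 * k - 1) * π ^ (2 * k) * |(bernoulli (2 * k) : ℝ)| /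
        (Nat.factorial (2 * k))) := by
  have h := hasSum_zeta_nat hk
  convert h using 1
  rw [← abs_of_nonneg (h.nonneg fun n => by positivity)]
  simp [abs_mul, abs_div, abs_pow, abs_of_pos pi_pos]

theorem hasSum_two_mul_pow_div_succ_mul_pi_pow (x : ℝ) (k : ℕ) :
    HasSum (fun m : ℕ => 2 * x ^ (2 * k + 1) / ((m + 1) * π) ^ (2 * k + 2))
      ((2 : ℝ) ^ (2 * (k + 1)) * |((bernoulli (2 * (k + 1)) : ℚ) : ℝ)| /
        (Nat.factorial (2 * (k + 1)) : ℝ) * x ^ (2 * (k + 1) - 1)) := by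
  have hzeta := (hasSum_nat_add_iff' 1).mpr (hasSum_zeta_nat_abs_bernoulli k.add_one_ne_zero)
  simp only [Finset.range_one, Finset.sum_singleton, Nat.cast_zero, Nat.cast_add, Nat.cast_one,
    ne_eq, mul_eq_zero, Nat.add_one_ne_zero, OfNat.ofNat_ne_zero, or_self, not_false_eq_true,
    zero_pow, div_zero, sub_zero] at hzeta
  rw [show 2 * (k + 1) - 1 = 2 * k + 1 by omega, show 2 * (k + 1) = 2 * k + 2 by omega] at hzeta ⊢
  have h := hzeta.mul_left (2 * x ^ (2 * k + 1) / π ^ (2 * k + 2))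
  rw [show (2 : ℝ) ^ (2 * k + 2) * |(bernoulli (2 * k + 2) : ℝ)| / (Nat.factorial (2 * k + 2))
    * x ^ (2 * k + 1) = 2 * x ^ (2 * k + 1) / π ^ (2 * k + 2) *
      (2 ^ (2 * k + 1) * π ^ (2 * k + 2) * |(bernoulli (2 * k + 2) : ℝ)| /
        (Nat.factorial (2 * k + 2))) by field_simp; ring]
  refine h.congr_fun fun m => ?_
  rw [mul_pow]
  field_simp

theorem hasSum_swap_of_nonneg {β γ : Type*} {f : β → γ → ℝ} (hf : ∀ b c, 0 ≤ f b c)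
    {u : β → ℝ} {v : γ → ℝ} {s : ℝ} (hu : ∀ b, HasSum (f b) (u b))
    (hv : ∀ c, HasSum (fun b => f b c) (v c)) (hs : HasSum u s) : HasSum v s := by
  have hsum : Summable (Function.uncurry f) :=
    (summable_prod_of_nonneg fun p => hf p.1 p.2).mpr
      ⟨fun b => (hu b).summable, hs.summable.congr fun b => (hu b).tsum_eq.symm⟩
  rw [← (hsum.hasSum.prod_fiberwise hu).unique hs]
  exact ((Equiv.prodComm γ β).hasSum_iff.mpr hsum.hasSum).prod_fiberwise hv

theorem hasSum_bernoulli_one_div_sub_cot_of_pos {x : ℝ} (hx : 0 < x) (hxπ : x < π) :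
    HasSum
      (fun n : ℕ =>
        (2 : ℝ) ^ (2 * (n + 1)) * |((bernoulli (2 * (n + 1)) : ℚ) : ℝ)| /
            (Nat.factorial (2 * (n + 1)) : ℝ) * x ^ (2 * (n + 1) - 1))
      (1 / x - cos x / sin x) := by
  refine hasSum_swap_of_nonneg (fun m k => by positivity) (fun m => ?_)
    (hasSum_two_mul_pow_div_succ_mul_pi_pow x)
    (hasSum_one_div_sub_cot (sin_pos_of_pos_of_lt_pi hx hxπ).ne')
  refine hasSum_two_mul_div_sq_sub_sq ?_
  rw [abs_of_pos hx, abs_of_pos (by positivity)]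
  nlinarith [pi_pos, (m.cast_nonneg : (0 : ℝ) ≤ m)]

theorem stmt_11 (x : ℝ) (hx₀ : 0 < |x|) (hxπ : |x| < π) :
    HasSum
      (fun n : ℕ =>
        (2 : ℝ) ^ (2 * (n + 1)) * |((bernoulli (2 * (n + 1)) : ℚ) : ℝ)| /
            (Nat.factorial (2 * (n + 1)) : ℝ) * x ^ (2 * (n + 1) - 1))
      (1 / x - Real.cos x / Real.sin x) := by
  rcases (abs_pos.mp hx₀).lt_or_gt with hneg | hpos
  · rw [abs_of_neg hneg] at hxπ
    have h := (hasSum_bernoulli_one_div_sub_cot_of_pos (neg_pos.mpr hneg) hxπ).neg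
    rw [cos_neg, sin_neg, show 1 / -x - cos x / -sin x = -(1 / x - cos x / sin x) by ring,
      neg_neg] at h
    refine h.congr_fun fun n => ?_
    rw [Odd.neg_pow ⟨n, by omega⟩]
    ring
  · rw [abs_of_pos hpos] at hxπ
    exact hasSum_bernoulli_one_div_sub_cot_of_pos hpos hxπ
end

section
/- For every real number x with 0 < |x| < π, 1/sin²(x) = 1/x² + Σ_{n=1}^∞ (2^(2n)·(2n−1)·|B₂ₙ|/(2n)!)·x^(2(n−1)), where the series converges to 1/sin²(x). -/
/-!
Let `B(X) = X / (e^X - 1)`. Differentiating `B (e^X - 1) = X` gives the formal identities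
`e^X B² = B - X B'`, whose `n`-th coefficient is `(1 - n) B_n / n!`, and
`(e^X - 2 + e^{-X}) e^X B² = X²`. Substituting `X = 2iz` turns the second one into
`sin² z · F(z) = z²` with `F(z) = ∑ (1 - n) (2i)ⁿ B_n / n! zⁿ`. Euler's formula for
`ζ(2m)` gives `0 < (-1)^(m+1) B_{2m}` and `|B_{2m}| / (2m)! ≤ 2 ζ(2) / (2π)^(2m)`, so `F`
converges absolutely for `|z| < π`; multiplying it by the exponential series of
`sin² z = -(e^{2iz} - 2 + e^{-2iz}) / 4` shows that `F(z) = z² / sin² z` there.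
-/

open Real

theorem hasSum_zeta_two_mul {m : ℕ} (hm : m ≠ 0) :
    HasSum (fun n : ℕ => 1 / (n : ℝ) ^ (2 * m))
      ((2 * π) ^ (2 * m) / 2 * ((-1) ^ (m + 1) * bernoulli (2 * m) / (2 * m).factorial)) := by
  convert hasSum_zeta_nat hm using 1
  rw [mul_pow, ← pow_sub_mul_pow 2 (show 1 ≤ 2 * m by omega)]
  ring

theorem neg_one_pow_mul_bernoulli_two_mul_pos {m : ℕ} (hm : m ≠ 0) :
    0 < (-1) ^ (m + 1) * (bernoulli (2 * m) : ℝ) := by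
  have hζ : 0 < (2 * π) ^ (2 * m) / 2 *
      ((-1) ^ (m + 1) * (bernoulli (2 * m) : ℝ) / (2 * m).factorial) :=
    one_pos.trans_le (by simpa using le_hasSum (hasSum_zeta_two_mul hm) 1 fun n _ => by positivity)
  exact (div_pos_iff_of_pos_right (by positivity)).mp
    (pos_of_mul_pos_right hζ (by positivity))

theorem neg_one_pow_mul_bernoulli_two_mul_div_factorial_le {m : ℕ} (hm : m ≠ 0) :
    (-1) ^ (m + 1) * (bernoulli (2 * m) : ℝ) / (2 * m).factorial ≤
      π ^ 2 / 3 / (2 * π) ^ (2 * m) := by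
  have hle := hasSum_le (fun n => ?_) (hasSum_zeta_two_mul hm) hasSum_zeta_two
  · rw [le_div_iff₀ (by positivity)]
    linarith
  · rcases n.eq_zero_or_pos with rfl | hn
    · simp [hm]
    · have hn : (1 : ℝ) ≤ n := by exact_mod_cast hn
      gcongr
      omega

theorem abs_bernoulli_two_mul {m : ℕ} (hm : m ≠ 0) :
    |(bernoulli (2 * m) : ℝ)| = (-1) ^ (m + 1) * bernoulli (2 * m) := by
  rw [← abs_of_pos (neg_one_pow_mul_bernoulli_two_mul_pos hm), abs_mul, abs_pow, abs_neg, abs_one,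
    one_pow, one_mul]

namespace PowerSeries

section Formal

variable {K : Type*} [Field K] [CharZero K]

theorem exp_mul_bernoulliPowerSeries_sq :
    exp K * bernoulliPowerSeries K ^ 2 =
      bernoulliPowerSeries K - X * d⁄dX K (bernoulliPowerSeries K) := by
  set B := bernoulliPowerSeries K
  have hB : B * (exp K - 1) = X := bernoulliPowerSeries_mul_exp_sub_one K
  have hB' : B * exp K + (exp K - 1) * d⁄dX K B = 1 := by
    simpa [derivative_exp] using congrArg (d⁄dX K) hB
  have hE : exp K - 1 ≠ 0 := by
    intro h
    simpa [coeff_exp] using congrArg (coeff 1) h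
  refine mul_right_cancel₀ (pow_ne_zero 2 hE) ?_
  linear_combination (exp K * B * (exp K - 1) - (exp K - 1)) * hB + X * (exp K - 1) * hB'

theorem coeff_exp_mul_bernoulliPowerSeries_sq (n : ℕ) :
    coeff n (exp K * bernoulliPowerSeries K ^ 2) =
      (1 - n) * algebraMap ℚ K (bernoulli n / n.factorial) := by
  rw [exp_mul_bernoulliPowerSeries_sq, map_sub]
  cases n with
  | zero => simp [bernoulliPowerSeries]
  | succ n =>
    rw [coeff_succ_X_mul, coeff_derivative, bernoulliPowerSeries, coeff_mk]
    push_cast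
    ring

theorem exp_sub_two_add_exp_neg_mul_exp_mul_bernoulliPowerSeries_sq :
    (exp K - 2 + rescale (-1) (exp K)) * (exp K * bernoulliPowerSeries K ^ 2) = X ^ 2 := by
  have hE : exp K * rescale (-1) (exp K) = 1 := by
    simpa using exp_mul_exp_eq_exp_add (A := K) 1 (-1)
  rw [← bernoulliPowerSeries_mul_exp_sub_one K]
  linear_combination (bernoulliPowerSeries K ^ 2) * hE

end Formal

theorem hasSum_coeff_mul_mul_pow {R : Type*} [NormedCommRing R] [CompleteSpace R] {f g : R⟦X⟧}
    {z : R} (hf : Summable fun n => ‖coeff n f * z ^ n‖)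
    (hg : Summable fun n => ‖coeff n g * z ^ n‖) :
    HasSum (fun n => coeff n (f * g) * z ^ n)
      ((∑' n, coeff n f * z ^ n) * ∑' n, coeff n g * z ^ n) := by
  convert hasSum_sum_range_mul_of_summable_norm hf hg using 2 with n
  rw [coeff_mul, Finset.Nat.sum_antidiagonal_eq_sum_range_succ (fun i j => coeff i f * coeff j g),
    Finset.sum_mul]
  refine Finset.sum_congr rfl fun k hk => ?_
  rw [← pow_sub_mul_pow z (Finset.mem_range_succ_iff.mp hk)]
  ring

theorem coeff_rescale_exp_mul_pow (a z : ℂ) (n : ℕ) :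
    coeff n (rescale a (exp ℂ)) * z ^ n = (a * z) ^ n / n.factorial := by
  simp only [coeff_rescale, coeff_exp, one_div, map_inv₀, map_natCast, mul_pow]
  ring

theorem summable_norm_coeff_rescale_exp_mul_pow (a z : ℂ) :
    Summable fun n => ‖coeff n (rescale a (exp ℂ)) * z ^ n‖ := by
  simp only [coeff_rescale_exp_mul_pow, norm_div, norm_pow, Complex.norm_natCast]
  exact Real.summable_pow_div_factorial ‖a * z‖

theorem hasSum_coeff_rescale_exp_mul_pow (a z : ℂ) :
    HasSum (fun n => coeff n (rescale a (exp ℂ)) * z ^ n) (Complex.exp (a * z)) := by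
  simp only [coeff_rescale_exp_mul_pow, Complex.exp_eq_exp_ℂ]
  exact NormedSpace.expSeries_div_hasSum_exp (a * z)

end PowerSeries

theorem Complex.neg_four_mul_sin_sq (z : ℂ) :
    -4 * Complex.sin z ^ 2 =
      Complex.exp (2 * Complex.I * z) - 2 + Complex.exp (-(2 * Complex.I) * z) := by
  have h : Complex.exp (z * Complex.I) * Complex.exp (-z * Complex.I) = 1 := by
    rw [← Complex.exp_add, ← add_mul, add_neg_cancel, zero_mul, Complex.exp_zero]
  rw [Complex.sin, show 2 * Complex.I * z = z * Complex.I + z * Complex.I by ring,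
    show -(2 * Complex.I) * z = -z * Complex.I + -z * Complex.I by ring,
    Complex.exp_add, Complex.exp_add]
  linear_combination (-2 : ℂ) * h -
    (Complex.exp (-z * Complex.I) - Complex.exp (z * Complex.I)) ^ 2 * Complex.I_sq

open PowerSeries

/-- `e^{2iz} (2iz / (e^{2iz} - 1))² = z² / sin² z`. -/
noncomputable def sqDivSinSqSeries : ℂ⟦X⟧ :=
  rescale (2 * Complex.I) (exp ℂ * bernoulliPowerSeries ℂ ^ 2)

/-- With `(-1)^(m+1) B_{2m}` in place of `|B_{2m}|`, the value at `m = 0` is `1`. -/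
noncomputable def sqDivSinSqCoeff (m : ℕ) : ℝ :=
  2 ^ (2 * m) * (2 * m - 1) * ((-1) ^ (m + 1) * bernoulli (2 * m)) / (2 * m).factorial

theorem sqDivSinSqCoeff_zero : sqDivSinSqCoeff 0 = 1 := by
  norm_num [sqDivSinSqCoeff]

theorem sqDivSinSqCoeff_of_ne_zero {m : ℕ} (hm : m ≠ 0) :
    sqDivSinSqCoeff m =
      2 ^ (2 * m) * (2 * m - 1) * |(bernoulli (2 * m) : ℝ)| / (2 * m).factorial := by
  rw [sqDivSinSqCoeff, abs_bernoulli_two_mul hm]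

theorem abs_sqDivSinSqCoeff_le {m : ℕ} (hm : m ≠ 0) :
    |sqDivSinSqCoeff m| ≤ π ^ 2 / 3 * (2 * m) / π ^ (2 * m) := by
  have hm1 : (1 : ℝ) ≤ m := by exact_mod_cast Nat.one_le_iff_ne_zero.mpr hm
  have hfactor : 0 ≤ (2 : ℝ) ^ (2 * m) * (2 * m - 1) := mul_nonneg (by positivity) (by linarith)
  have hB := div_pos (neg_one_pow_mul_bernoulli_two_mul_pos hm)
    (show (0 : ℝ) < (2 * m).factorial by positivity)
  rw [sqDivSinSqCoeff, mul_div_assoc, abs_of_nonneg (mul_nonneg hfactor hB.le)]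
  calc 2 ^ (2 * m) * (2 * m - 1) * ((-1) ^ (m + 1) * bernoulli (2 * m) / (2 * m).factorial)
      ≤ 2 ^ (2 * m) * (2 * m - 1) * (π ^ 2 / 3 / (2 * π) ^ (2 * m)) :=
        mul_le_mul_of_nonneg_left (neg_one_pow_mul_bernoulli_two_mul_div_factorial_le hm) hfactor
    _ = π ^ 2 / 3 * (2 * m - 1) / π ^ (2 * m) := by
        rw [mul_pow]
        field_simp
    _ ≤ π ^ 2 / 3 * (2 * m) / π ^ (2 * m) := by gcongr; linarith

theorem coeff_sqDivSinSqSeries (n : ℕ) :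
    coeff n sqDivSinSqSeries =
      (2 * Complex.I) ^ n * ((1 - n) * (bernoulli n / n.factorial : ℚ)) := by
  rw [sqDivSinSqSeries, coeff_rescale, coeff_exp_mul_bernoulliPowerSeries_sq, eq_ratCast]

theorem coeff_sqDivSinSqSeries_odd (m : ℕ) : coeff (2 * m + 1) sqDivSinSqSeries = 0 := by
  rw [coeff_sqDivSinSqSeries]
  rcases eq_or_ne m 0 with rfl | hm
  · simp
  · rw [bernoulli_eq_zero_of_odd (odd_two_mul_add_one m) (by omega)]
    simp

theorem coeff_sqDivSinSqSeries_two_mul (m : ℕ) :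
    coeff (2 * m) sqDivSinSqSeries = sqDivSinSqCoeff m := by
  have hI : (2 * Complex.I) ^ (2 * m) = (-1) ^ m * 2 ^ (2 * m) := by
    rw [mul_pow, pow_mul Complex.I, Complex.I_sq, mul_comm]
  rw [coeff_sqDivSinSqSeries, hI, sqDivSinSqCoeff]
  push_cast
  ring

theorem norm_coeff_sqDivSinSqSeries_le {n : ℕ} (hn : n ≠ 0) :
    ‖coeff n sqDivSinSqSeries‖ ≤ π ^ 2 / 3 * n / π ^ n := by
  obtain ⟨m, rfl | rfl⟩ := n.even_or_odd'
  · rw [coeff_sqDivSinSqSeries_two_mul, Complex.norm_real, Real.norm_eq_abs]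
    exact_mod_cast abs_sqDivSinSqCoeff_le (m := m) (by omega)
  · rw [coeff_sqDivSinSqSeries_odd, norm_zero]
    positivity

theorem summable_norm_coeff_sqDivSinSqSeries_mul_pow {z : ℂ} (hz : ‖z‖ < π) :
    Summable fun n => ‖coeff n sqDivSinSqSeries * z ^ n‖ := by
  have hρ : ‖‖z‖ / π‖ < 1 := by
    rwa [norm_div, norm_norm, Real.norm_of_nonneg pi_pos.le, div_lt_one pi_pos]
  refine (summable_nat_add_iff 1).mp <|
    ((summable_pow_mul_geometric_of_norm_lt_one 1 hρ).mul_left (π ^ 2 / 3)).comp_injective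
      (add_left_injective 1) |>.of_nonneg_of_le (fun n => norm_nonneg _) fun n => ?_
  rw [norm_mul, norm_pow]
  calc ‖coeff (n + 1) sqDivSinSqSeries‖ * ‖z‖ ^ (n + 1)
      ≤ π ^ 2 / 3 * ↑(n + 1) / π ^ (n + 1) * ‖z‖ ^ (n + 1) := by
        gcongr
        exact norm_coeff_sqDivSinSqSeries_le n.succ_ne_zero
    _ = π ^ 2 / 3 * (↑(n + 1) ^ 1 * (‖z‖ / π) ^ (n + 1)) := by
        rw [div_pow]; ring

theorem rescale_exp_sub_two_add_mul_sqDivSinSqSeries :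
    (rescale (2 * Complex.I) (exp ℂ) - 2 + rescale (-(2 * Complex.I)) (exp ℂ)) *
      sqDivSinSqSeries = C (-4) * X ^ 2 := by
  have h := congrArg (rescale (2 * Complex.I))
    (exp_sub_two_add_exp_neg_mul_exp_mul_bernoulliPowerSeries_sq (K := ℂ))
  rw [map_mul, map_add, map_sub, map_ofNat, rescale_rescale, map_pow, rescale_X, neg_one_mul]
    at h
  rw [sqDivSinSqSeries, h, mul_pow, ← map_pow, mul_pow, Complex.I_sq]
  norm_num

theorem hasSum_coeff_sqDivSinSqSeries_mul_pow {z : ℂ} (hz : ‖z‖ < π)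
    (hsin : Complex.sin z ≠ 0) :
    HasSum (fun n => coeff n sqDivSinSqSeries * z ^ n) (z ^ 2 / Complex.sin z ^ 2) := by
  have hF := summable_norm_coeff_sqDivSinSqSeries_mul_pow hz
  set s := ∑' n, coeff n sqDivSinSqSeries * z ^ n
  have hexp_mul (a : ℂ) :
      HasSum (fun n => coeff n (rescale a (exp ℂ) * sqDivSinSqSeries) * z ^ n)
        (Complex.exp (a * z) * s) := by
    simpa only [(hasSum_coeff_rescale_exp_mul_pow a z).tsum_eq] using
      hasSum_coeff_mul_mul_pow (summable_norm_coeff_rescale_exp_mul_pow a z) hF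
  have hprod := ((hexp_mul (2 * Complex.I)).sub (hF.of_norm.hasSum.mul_left 2)).add
    (hexp_mul (-(2 * Complex.I)))
  have hX2 : HasSum (fun n => coeff n (C (-4) * X ^ 2 : ℂ⟦X⟧) * z ^ n) (-4 * z ^ 2) := by
    convert hasSum_ite_eq 2 (-4 * z ^ 2) using 2 with n
    rw [coeff_C_mul, coeff_X_pow]
    split_ifs with h <;> simp [h]
  rw [← rescale_exp_sub_two_add_mul_sqDivSinSqSeries] at hX2
  simp only [← map_ofNat C 2, add_mul, sub_mul, map_add, map_sub, coeff_C_mul, mul_assoc] at hX2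
  have hs : -4 * Complex.sin z ^ 2 * s = -4 * z ^ 2 := by
    rw [Complex.neg_four_mul_sin_sq, ← hprod.unique hX2]
    ring
  have hs' : s = z ^ 2 / Complex.sin z ^ 2 := by
    field_simp
    linear_combination (-1 / 4 : ℂ) * hs
  rw [← hs']
  exact hF.of_norm.hasSum

theorem hasSum_sqDivSinSqCoeff_mul_pow {x : ℝ} (hx : x ≠ 0) (hxπ : |x| < π) :
    HasSum (fun m => sqDivSinSqCoeff m * x ^ (2 * m)) (x ^ 2 / Real.sin x ^ 2) := by
  have hsin : Real.sin x ≠ 0 := by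
    rwa [Ne, Real.sin_eq_zero_iff_of_lt_of_lt (neg_lt_of_abs_lt hxπ) (lt_of_abs_lt hxπ)]
  have h := hasSum_coeff_sqDivSinSqSeries_mul_pow (z := x)
    (by rwa [Complex.norm_real, Real.norm_eq_abs]) (by exact_mod_cast hsin)
  rw [← (mul_right_injective₀ (two_ne_zero' ℕ)).hasSum_iff] at h
  · refine Complex.hasSum_ofReal.mp ?_
    push_cast
    simpa only [Function.comp_def, coeff_sqDivSinSqSeries_two_mul] using h
  · rintro n hn
    obtain ⟨m, rfl⟩ : Odd n :=
      Nat.not_even_iff_odd.mp fun ⟨m, hm⟩ => hn ⟨m, by simp [hm, two_mul]⟩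
    rw [coeff_sqDivSinSqSeries_odd, zero_mul]

theorem stmt_12 (x : ℝ) (hx₀ : 0 < |x|) (hxπ : |x| < π) :
    HasSum
      (fun n : ℕ =>
        (2 : ℝ) ^ (2 * (n + 1)) * (2 * (n + 1) - 1 : ℝ) * |((bernoulli (2 * (n + 1)) : ℚ) : ℝ)| /
            (Nat.factorial (2 * (n + 1)) : ℝ) * x ^ (2 * n))
      (1 / Real.sin x ^ 2 - 1 / x ^ 2) := by
  have hx : x ≠ 0 := abs_pos.mp hx₀
  have h :=
    ((hasSum_nat_add_iff' 1).mpr (hasSum_sqDivSinSqCoeff_mul_pow hx hxπ)).div_const (x ^ 2)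
  have hterm (n : ℕ) :
      (2 : ℝ) ^ (2 * (n + 1)) * (2 * (n + 1) - 1 : ℝ) *
            |((bernoulli (2 * (n + 1)) : ℚ) : ℝ)| / (Nat.factorial (2 * (n + 1)) : ℝ) *
          x ^ (2 * n) =
        sqDivSinSqCoeff (n + 1) * x ^ (2 * (n + 1)) / x ^ 2 := by
    rw [sqDivSinSqCoeff_of_ne_zero n.succ_ne_zero, mul_add 2 n 1, pow_add x]
    field_simp
    push_cast
    ring
  have hsum : (x ^ 2 / Real.sin x ^ 2 - ∑ i ∈ Finset.range 1, sqDivSinSqCoeff i * x ^ (2 * i)) /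
      x ^ 2 = 1 / Real.sin x ^ 2 - 1 / x ^ 2 := by
    rw [Finset.sum_range_one, sqDivSinSqCoeff_zero, mul_zero, pow_zero, one_mul]
    field_simp
  simpa only [hterm, hsum] using h
end

section
/- The function f(t) = 4·arctan((t−1)/(t+1)) − 3(t²−1)/(t² + t + 1) is strictly increasing and strictly positive on the interval (1, ∞). -/
/-! `f(1) = 0`, and since `arctan ((t - 1) / (t + 1))` has derivative `1 / (t² + 1)`,
`f'(t) = 4 / (t² + 1) - 3 (t² + 4t + 1) / (t² + t + 1)² = (t - 1)⁴ / ((t² + 1)(t² + t + 1)²)`,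
which is positive for `t > 1`. -/

open Real Set

noncomputable def arctanRationalGap (t : ℝ) : ℝ :=
  4 * arctan ((t - 1) / (t + 1)) - 3 * (t ^ 2 - 1) / (t ^ 2 + t + 1)

lemma sq_add_self_add_one_pos (t : ℝ) : 0 < t ^ 2 + t + 1 := by
  nlinarith [sq_nonneg (t + 1 / 2)]

lemma hasDerivAt_arctan_sub_one_div_add_one {t : ℝ} (ht : t + 1 ≠ 0) :
    HasDerivAt (fun t : ℝ => arctan ((t - 1) / (t + 1))) (1 / (t ^ 2 + 1)) t := by
  have hmobius : HasDerivAt (fun t : ℝ => (t - 1) / (t + 1))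
      ((1 * (t + 1) - (t - 1) * 1) / (t + 1) ^ 2) t :=
    ((hasDerivAt_id t).sub_const 1).div ((hasDerivAt_id t).add_const 1) ht
  refine hmobius.arctan.congr_deriv ?_
  have : t ^ 2 + 1 ≠ 0 := by positivity
  field_simp
  ring

lemma hasDerivAt_sq_sub_one_div (t : ℝ) :
    HasDerivAt (fun t : ℝ => (t ^ 2 - 1) / (t ^ 2 + t + 1))
      ((t ^ 2 + 4 * t + 1) / (t ^ 2 + t + 1) ^ 2) t := by
  have hnum : HasDerivAt (fun t : ℝ => t ^ 2 - 1) (2 * t) t := by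
    simpa using (hasDerivAt_pow 2 t).sub_const 1
  have hden : HasDerivAt (fun t : ℝ => t ^ 2 + t + 1) (2 * t + 1) t := by
    simpa using ((hasDerivAt_pow 2 t).add (hasDerivAt_id t)).add_const 1
  refine (hnum.div hden (sq_add_self_add_one_pos t).ne').congr_deriv ?_
  ring

lemma hasDerivAt_arctanRationalGap {t : ℝ} (ht : t + 1 ≠ 0) :
    HasDerivAt arctanRationalGap ((t - 1) ^ 4 / ((t ^ 2 + 1) * (t ^ 2 + t + 1) ^ 2)) t := by
  have h := ((hasDerivAt_arctan_sub_one_div_add_one ht).const_mul 4).sub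
    ((hasDerivAt_sq_sub_one_div t).const_mul 3)
  simp only [← mul_div_assoc] at h
  refine h.congr_deriv ?_
  have := sq_add_self_add_one_pos t
  rw [div_sub_div _ _ (by positivity) (by positivity), mul_comm (t ^ 2 + 1)]
  ring

lemma arctanRationalGap_one : arctanRationalGap 1 = 0 := by
  norm_num [arctanRationalGap]

lemma strictMonoOn_arctanRationalGap : StrictMonoOn arctanRationalGap (Ici 1) := by
  have hderiv {t : ℝ} (ht : 1 ≤ t) := hasDerivAt_arctanRationalGap (t := t) (by linarith)
  refine strictMonoOn_of_deriv_pos (convex_Ici 1)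
    (fun t ht => (hderiv ht).continuousAt.continuousWithinAt) fun t ht => ?_
  rw [interior_Ici, mem_Ioi] at ht
  rw [(hderiv ht.le).deriv]
  have := sq_add_self_add_one_pos t
  have : 0 < t - 1 := by linarith
  positivity

theorem stmt_14 :
    StrictMonoOn
        (fun t : ℝ => 4 * Real.arctan ((t - 1) / (t + 1)) - 3 * (t ^ 2 - 1) / (t ^ 2 + t + 1))
        (Set.Ioi (1 : ℝ)) ∧
      ∀ t ∈ Set.Ioi (1 : ℝ),
        0 < 4 * Real.arctan ((t - 1) / (t + 1)) - 3 * (t ^ 2 - 1) / (t ^ 2 + t + 1) := by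
  refine ⟨strictMonoOn_arctanRationalGap.mono Ioi_subset_Ici_self, fun t ht => ?_⟩
  have := strictMonoOn_arctanRationalGap self_mem_Ici (Ioi_subset_Ici_self ht) ht
  rwa [arctanRationalGap_one] at this
end

section
/- The function g(t) = (t/arctan(t) − 1)/t² is strictly decreasing on the interval (0, 1), and satisfies lim_{t→0⁺} g(t) = 1/3 and lim_{t→1⁻} g(t) = 4/π − 1; in particular, 4/π − 1 < g(t) < 1/3 for all t ∈ (0, 1). -/
/-!
With `A = arctan t`, the derivative of `g t = (t / A - 1) / t ^ 2` is
`g' t = -F t / (t ^ 3 * A ^ 2 * (1 + t ^ 2))` with `F t = t A (1 + t²) + t² - 2 A² (1 + t²)`.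
Both `F` and `F'` vanish at `0`, and since `0 < A < t` for `t > 0`,
`(1 + t²) F'' t = 2 t³ A + 6 t (t - A) + 4 A (t - A) (1 + t²) > 0`; hence `F > 0` and `g` is
strictly decreasing on `(0, ∞)`. The limit at `0` is l'Hôpital's rule for `(t - A) / t³`, the one
at `1` is continuity with `arctan 1 = π / 4`, and the bounds follow from strict monotonicity.
-/

open Real Filter Set Topology

lemma pos_of_hasDerivAt_of_eq_zero {f f' : ℝ → ℝ} {a t : ℝ}
    (hf : ∀ x ∈ Icc a t, HasDerivAt f (f' x) x) (hf' : ∀ x ∈ Ioo a t, 0 < f' x)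
    (ha : f a = 0) (hat : a < t) : 0 < f t := by
  have hmono : StrictMonoOn f (Icc a t) :=
    strictMonoOn_of_hasDerivWithinAt_pos (convex_Icc a t)
      (fun x hx => (hf x hx).continuousAt.continuousWithinAt)
      (fun x hx => (hf x (interior_subset hx)).hasDerivWithinAt)
      (by rwa [interior_Icc])
  simpa [ha] using hmono (left_mem_Icc.2 hat.le) (right_mem_Icc.2 hat.le) hat

section

variable {α β : Type*} [LinearOrder α] [TopologicalSpace α] [OrderTopology α] [DenselyOrdered α]
  [Preorder β] [TopologicalSpace β] [OrderClosedTopology β] {f : α → β} {a b t : α} {l : β}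

lemma StrictAntiOn.lt_of_tendsto_nhdsGT (hf : StrictAntiOn f (Ioo a b))
    (hl : Tendsto f (𝓝[>] a) (𝓝 l)) (ht : t ∈ Ioo a b) : f t < l := by
  obtain ⟨m, ham, hmt⟩ := exists_between ht.1
  have hm : m ∈ Ioo a b := ⟨ham, hmt.trans ht.2⟩
  have := nhdsGT_neBot_of_exists_gt ⟨m, ham⟩
  have : f m ≤ l := ge_of_tendsto hl <| by
    filter_upwards [Ioo_mem_nhdsGT ham] with s hs
    exact (hf ⟨hs.1, hs.2.trans hm.2⟩ hm hs.2).le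
  exact (hf hm ht hmt).trans_le this

lemma StrictAntiOn.lt_of_tendsto_nhdsLT (hf : StrictAntiOn f (Ioo a b))
    (hl : Tendsto f (𝓝[<] b) (𝓝 l)) (ht : t ∈ Ioo a b) : l < f t := by
  obtain ⟨m, htm, hmb⟩ := exists_between ht.2
  have hm : m ∈ Ioo a b := ⟨ht.1.trans htm, hmb⟩
  have := nhdsLT_neBot_of_exists_lt ⟨m, hmb⟩
  have : l ≤ f m := le_of_tendsto hl <| by
    filter_upwards [Ioo_mem_nhdsLT hmb] with s hs
    exact (hf hm ⟨hm.1.trans hs.1, hs.2⟩ hs.1).le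
  exact this.trans_lt (hf ht hm htm)

end

lemma Real.arctan_lt_self {t : ℝ} (ht : 0 < t) : arctan t < t := by
  refine sub_pos.1 <| pos_of_hasDerivAt_of_eq_zero (f := fun x => x - arctan x)
    (fun x _ => (hasDerivAt_id x).sub (hasDerivAt_arctan x)) (fun x hx => ?_) (by simp) ht
  have hx : 0 < x := hx.1
  rw [sub_pos, div_lt_one (by positivity)]
  nlinarith

lemma Real.tendsto_self_div_arctan : Tendsto (fun t => t / arctan t) (𝓝[≠] 0) (𝓝 1) := by
  have h := (hasDerivAt_iff_tendsto_slope_zero.1 (hasDerivAt_arctan 0)).inv₀ (by norm_num)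
  simpa [div_eq_inv_mul] using h

lemma Real.tendsto_sub_arctan_div_pow_three :
    Tendsto (fun t => (t - arctan t) / t ^ 3) (𝓝[≠] 0) (𝓝 (1 / 3)) := by
  refine HasDerivAt.lhopital_zero_nhdsNE (f' := fun x => 1 - 1 / (1 + x ^ 2))
    (g' := fun x => 3 * x ^ 2)
    (.of_forall fun x => (hasDerivAt_id x).sub (hasDerivAt_arctan x))
    (.of_forall fun x => by simpa using hasDerivAt_pow 3 x)
    (eventually_nhdsWithin_of_forall fun x hx => by simpa using hx)
    ?_ ?_ ?_
  · exact ((continuous_id.sub continuous_arctan).tendsto' 0 0 (by simp)).mono_left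
      nhdsWithin_le_nhds
  · exact ((continuous_pow 3).tendsto' 0 0 (by simp)).mono_left nhdsWithin_le_nhds
  · have hc : Tendsto (fun x : ℝ => 1 / (3 * (1 + x ^ 2))) (𝓝[≠] 0) (𝓝 (1 / 3)) := by
      refine ((Continuous.tendsto ?_ 0).mono_left nhdsWithin_le_nhds).trans_eq (by norm_num)
      exact continuous_const.div (by fun_prop) fun x => by positivity
    refine hc.congr' (eventually_nhdsWithin_of_forall fun x (hx : x ≠ 0) => ?_)
    field_simp
    ring

noncomputable def arctanRatio (t : ℝ) : ℝ := (t / arctan t - 1) / t ^ 2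

namespace arctanRatio

noncomputable def F (t : ℝ) : ℝ :=
  t * arctan t * (1 + t ^ 2) + t ^ 2 - 2 * (arctan t ^ 2 * (1 + t ^ 2))

noncomputable def F' (t : ℝ) : ℝ := 3 * arctan t * (t ^ 2 - 1) + 3 * t - 4 * (t * arctan t ^ 2)

lemma hasDerivAt_F (t : ℝ) : HasDerivAt F (F' t) t := by
  have hA := hasDerivAt_arctan t
  have hsq := hasDerivAt_pow 2 t
  refine ((((hasDerivAt_id' t).mul hA).mul (hsq.const_add 1)).add hsq).sub
    (((hA.pow 2).mul (hsq.const_add 1)).const_mul 2) |>.congr_deriv ?_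
  have : (1 : ℝ) + t ^ 2 ≠ 0 := by positivity
  simp only [F', Pi.pow_apply, Pi.mul_apply]
  field_simp
  ring

lemma hasDerivAt_F' (t : ℝ) :
    HasDerivAt F' ((6 * t ^ 2 + 2 * t * arctan t * (3 * t ^ 2 - 1) - 4 * arctan t ^ 2 * (1 + t ^ 2))
      / (1 + t ^ 2)) t := by
  have hA := hasDerivAt_arctan t
  refine (((hA.const_mul 3).mul ((hasDerivAt_pow 2 t).sub_const 1)).add
    ((hasDerivAt_id' t).const_mul 3)).sub (((hasDerivAt_id' t).mul (hA.pow 2)).const_mul 4)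
    |>.congr_deriv ?_
  have : (1 : ℝ) + t ^ 2 ≠ 0 := by positivity
  simp only [Pi.pow_apply]
  field_simp
  ring

lemma F'_pos {t : ℝ} (ht : 0 < t) : 0 < F' t := by
  refine pos_of_hasDerivAt_of_eq_zero (fun x _ => hasDerivAt_F' x) (fun x hx => ?_)
    (by simp [F']) ht
  have hx : 0 < x := hx.1
  have ha : 0 < arctan x := arctan_pos.2 hx
  have hxa : 0 < x - arctan x := sub_pos.2 (arctan_lt_self hx)
  have key : 6 * x ^ 2 + 2 * x * arctan x * (3 * x ^ 2 - 1) - 4 * arctan x ^ 2 * (1 + x ^ 2) =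
      2 * x ^ 3 * arctan x + 6 * x * (x - arctan x) +
        4 * arctan x * (x - arctan x) * (1 + x ^ 2) := by
    ring
  rw [key]
  positivity

lemma F_pos {t : ℝ} (ht : 0 < t) : 0 < F t :=
  pos_of_hasDerivAt_of_eq_zero (fun x _ => hasDerivAt_F x) (fun x hx => F'_pos hx.1)
    (by simp [F]) ht

lemma hasDerivAt {t : ℝ} (ht : t ≠ 0) :
    HasDerivAt arctanRatio (-F t / (t ^ 3 * arctan t ^ 2 * (1 + t ^ 2))) t := by
  have hA : arctan t ≠ 0 := by rwa [Ne, arctan_eq_zero_iff]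
  refine (((hasDerivAt_id' t).div (hasDerivAt_arctan t) hA).sub_const 1).div (hasDerivAt_pow 2 t)
    (pow_ne_zero 2 ht) |>.congr_deriv ?_
  have : (1 : ℝ) + t ^ 2 ≠ 0 := by positivity
  simp only [F, Pi.div_apply]
  field_simp
  ring

lemma strictAntiOn_Ioi : StrictAntiOn arctanRatio (Ioi 0) := by
  refine strictAntiOn_of_hasDerivWithinAt_neg (convex_Ioi 0)
    (fun x hx => (hasDerivAt (ne_of_gt hx)).continuousAt.continuousWithinAt)
    (fun x hx => (hasDerivAt (ne_of_gt (interior_subset hx))).hasDerivWithinAt)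
    (fun x hx => ?_)
  rw [interior_Ioi] at hx
  have hA : 0 < arctan x := arctan_pos.2 hx
  exact div_neg_of_neg_of_pos (neg_neg_of_pos (F_pos hx))
    (mul_pos (mul_pos (pow_pos hx 3) (pow_pos hA 2)) (by positivity))

lemma tendsto_nhdsNE_zero : Tendsto arctanRatio (𝓝[≠] 0) (𝓝 (1 / 3)) := by
  have h := tendsto_sub_arctan_div_pow_three.mul tendsto_self_div_arctan
  rw [mul_one] at h
  refine h.congr' (eventually_nhdsWithin_of_forall fun t (ht : t ≠ 0) => ?_)
  have hA : arctan t ≠ 0 := by rwa [Ne, arctan_eq_zero_iff]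
  rw [arctanRatio]
  field_simp

lemma tendsto_nhdsLT_one : Tendsto arctanRatio (𝓝[<] 1) (𝓝 (4 / π - 1)) := by
  have hc : ContinuousAt arctanRatio 1 :=
    ((continuousAt_id.div continuousAt_arctan (by simp [pi_ne_zero])).sub continuousAt_const).div
      (continuous_pow 2).continuousAt (by norm_num)
  refine hc.continuousWithinAt.tendsto.trans_eq ?_
  rw [arctanRatio, arctan_one]
  field_simp

end arctanRatio

theorem stmt_16 :
    StrictAntiOn (fun t : ℝ => (t / Real.arctan t - 1) / t ^ 2) (Set.Ioo (0 : ℝ) 1) ∧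
      Tendsto (fun t : ℝ => (t / Real.arctan t - 1) / t ^ 2) (nhdsWithin 0 (Set.Ioi 0))
        (nhds (1 / 3)) ∧
      Tendsto (fun t : ℝ => (t / Real.arctan t - 1) / t ^ 2) (nhdsWithin 1 (Set.Iio 1))
        (nhds (4 / π - 1)) ∧
      ∀ t ∈ Set.Ioo (0 : ℝ) 1,
        4 / π - 1 < (t / Real.arctan t - 1) / t ^ 2 ∧ (t / Real.arctan t - 1) / t ^ 2 < 1 / 3 := by
  have hanti : StrictAntiOn arctanRatio (Ioo 0 1) :=
    arctanRatio.strictAntiOn_Ioi.mono Ioo_subset_Ioi_self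
  have hzero := arctanRatio.tendsto_nhdsNE_zero.mono_left
    (nhdsWithin_mono 0 fun t ht => ne_of_gt ht)
  have hone := arctanRatio.tendsto_nhdsLT_one
  exact ⟨hanti, hzero, hone, fun t ht =>
    ⟨hanti.lt_of_tendsto_nhdsLT hone ht, hanti.lt_of_tendsto_nhdsGT hzero ht⟩⟩
end

section
/- For every real number p with (1 + √(12/π − 3))/2 < p < 1, there exists T₀ = T₀(p) > 1 such that for all positive reals a, b with a/b ∈ (T₀, ∞) the inequality C̄(p·a + (1−p)·b, p·b + (1−p)·a) > T(a,b) holds. -/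
open Real

/-!
Concavity of `arctan` on `[0, ∞)` puts its graph above the chord from `0` to `1`, so
`arctan t > π t / 4` for `0 < t < 1`, and hence `T(a, b) < 2 (a + b) / π` for `a > b > 0`.
The two arguments of `C̄` have sum `a + b` and product `p (1 - p) (a + b)² + (2p - 1)² a b`,
so `C̄ > 2 (a + b) / π` as soon as `(2p - 1)² a b < c (a + b)²` with
`c = 1 - 3/π - p (1 - p)`. The lower bound on `p` is exactly `c > 0`, and then the inequality
holds whenever `a / b > (2p - 1)² / c`.
-/

open Set

lemma strictConcaveOn_arctan_Ici : StrictConcaveOn ℝ (Ici 0) arctan := by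
  refine StrictAntiOn.strictConcaveOn_of_deriv (convex_Ici 0) continuous_arctan.continuousOn ?_
  rw [interior_Ici, Real.deriv_arctan]
  intro x hx y hy hxy
  have hx : (0 : ℝ) < x := hx
  dsimp only
  gcongr

lemma pi_div_four_mul_lt_arctan {t : ℝ} (h0 : 0 < t) (h1 : t < 1) : π / 4 * t < arctan t := by
  have hchord := strictConcaveOn_arctan_Ici.2 self_mem_Ici (show (1 : ℝ) ∈ Ici 0 by norm_num)
    zero_ne_one (sub_pos.2 h1) h0 (sub_add_cancel 1 t)
  simpa [arctan_one, mul_comm] using hchord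

lemma seiffertT_lt_two_mul_add_div_pi {a b : ℝ} (hb : 0 < b) (hba : b < a) :
    seiffertT a b < 2 * (a + b) / π := by
  have hab : 0 < a + b := by linarith
  set t := (a - b) / (a + b) with ht
  have ht0 : 0 < t := div_pos (by linarith) hab
  have harc := pi_div_four_mul_lt_arctan ht0 ((div_lt_one hab).2 (by linarith))
  calc seiffertT a b = (a + b) * t / (2 * arctan t) := by
        rw [seiffertT, ht, mul_div_cancel₀ _ hab.ne']
    _ < (a + b) * t / (2 * (π / 4 * t)) := by gcongr
    _ = 2 * (a + b) / π := by field_simp; ring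

lemma centroidalMean_mix (p a b : ℝ) :
    centroidalMean (p * a + (1 - p) * b) (p * b + (1 - p) * a)
      = 2 * ((1 - p * (1 - p)) * (a + b) ^ 2 - (2 * p - 1) ^ 2 * (a * b)) / (3 * (a + b)) := by
  rw [centroidalMean]
  ring

lemma two_mul_add_div_pi_lt_centroidalMean_mix {p a b : ℝ} (hab : 0 < a + b)
    (h : (2 * p - 1) ^ 2 * (a * b) < (1 - 3 / π - p * (1 - p)) * (a + b) ^ 2) :
    2 * (a + b) / π < centroidalMean (p * a + (1 - p) * b) (p * b + (1 - p) * a) := by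
  rw [centroidalMean_mix, div_lt_div_iff₀ pi_pos (by positivity)]
  have hπ : 3 / π * π = 3 := div_mul_cancel₀ 3 pi_ne_zero
  nlinarith [mul_lt_mul_of_pos_right h pi_pos]

lemma mul_mul_lt_mul_add_sq_of_div_lt {k c T a b : ℝ} (hc : 0 < c) (ha : 0 < a) (hb : 0 < b)
    (hT : k / c ≤ T) (hTab : T < a / b) : k * (a * b) < c * (a + b) ^ 2 := by
  have hk : k < c * (a / b) := (div_le_iff₀' hc).1 hT |>.trans_lt (by gcongr)
  calc k * (a * b) < c * (a / b) * (a * b) := by gcongr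
    _ = c * a ^ 2 := by field_simp
    _ < c * (a + b) ^ 2 := by gcongr; linarith

lemma sub_three_div_pi_sub_mul_one_sub_pos {p : ℝ} (hp : (1 + √(12 / π - 3)) / 2 < p) :
    0 < 1 - 3 / π - p * (1 - p) := by
  have hsq : 12 / π - 3 < (2 * p - 1) ^ 2 :=
    (sqrt_lt' (by linarith [sqrt_nonneg (12 / π - 3)])).1 (by linarith)
  -- `4 (1 - 3/π - p (1 - p)) = (2p - 1)² - (12/π - 3)`
  have h12 : 12 / π = 4 * (3 / π) := by ring
  nlinarith

theorem stmt_18_general (p : ℝ) (hp₁ : (1 + Real.sqrt (12 / π - 3)) / 2 < p) :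
    ∃ T₀ : ℝ, 1 < T₀ ∧
      ∀ a b : ℝ, 0 < a → 0 < b → a / b ∈ Set.Ioi T₀ →
        centroidalMean (p * a + (1 - p) * b) (p * b + (1 - p) * a) > seiffertT a b := by
  have hc := sub_three_div_pi_sub_mul_one_sub_pos hp₁
  refine ⟨max 2 ((2 * p - 1) ^ 2 / (1 - 3 / π - p * (1 - p))), by simp, ?_⟩
  intro a b ha hb hT
  have hT : max 2 _ < a / b := hT
  have hba : b < a := (one_lt_div hb).1 ((one_lt_two.trans_le (le_max_left _ _)).trans hT)
  calc seiffertT a b < 2 * (a + b) / π := seiffertT_lt_two_mul_add_div_pi hb hba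
    _ < _ := two_mul_add_div_pi_lt_centroidalMean_mix (by linarith)
        (mul_mul_lt_mul_add_sq_of_div_lt hc ha hb (le_max_right _ _) hT)

theorem stmt_18 (p : ℝ) (hp₁ : (1 + Real.sqrt (12 / π - 3)) / 2 < p) (hp₂ : p < 1) :
    ∃ T₀ : ℝ, 1 < T₀ ∧
      ∀ a b : ℝ, 0 < a → 0 < b → a / b ∈ Set.Ioi T₀ →
        centroidalMean (p * a + (1 - p) * b) (p * b + (1 - p) * a) > seiffertT a b :=
  stmt_18_general p hp₁
end
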